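/- (Pathwise domination of the tamed exponential scheme.) Let K ≥ 1, c ≥ 1, T > 0, and let F : ℝ^d → ℝ^d be continuously differentiable satisfying the one-sided Lipschitz condition ⟨x − y, F(x) − F(y)⟩ ≤ K‖x − y‖² and ‖DF(x)‖ ≤ K(1 + ‖x‖^c) for all x, y. Let A, B_1, …, B_m ∈ ℝ^{d×d}, C := A − (1/2)∑_{i=1}^m B_i², let N ≥ 1 be a natural number, Δt = T/N, and let G_0, …, G_{N−1} ∈ ℝ^{d×d} be arbitrary matrices. Set M_k = exp(C·Δt + G_k), and define the scheme Y_0 = ξ ∈ ℝ^d, Y_{k+1} = M_k(Y_k + Δt·F̃_{Δt}(Y_k)) for 0 ≤ k ≤ N−1. With λ := e^{1 + T‖C‖}·(1 + 4TK + 2T‖F(0)‖ + 2K)², define D_n := (λ + ‖ξ‖)·e^{λ}·max_{0 ≤ u ≤ n} ∏_{k=u}^{n−1} ‖M_k‖ (an empty product equals 1, so D_0 = (λ + ‖ξ‖)e^{λ}). Then for every n ∈ {0, 1, …, N}: if D_k ≤ N^{1/(2c)} and ‖G_k‖ ≤ 1 for all k < n, then ‖Y_n‖ ≤ D_n. -/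

import Mathlib

open scoped RealInnerProductSpace

/-- The tamed drift `F̃_h(x) = F(x) / (1 + h‖F(x)‖)`. -/
noncomputable def tamedDrift {d : ℕ} (F : EuclideanSpace ℝ (Fin d) → EuclideanSpace ℝ (Fin d))
    (h : ℝ) (x : EuclideanSpace ℝ (Fin d)) : EuclideanSpace ℝ (Fin d) :=
  (1 + h * ‖F x‖)⁻¹ • F x

/-- A matrix acting on Euclidean space. -/
noncomputable def matAct {d : ℕ} (M : Matrix (Fin d) (Fin d) ℝ)
    (v : EuclideanSpace ℝ (Fin d)) : EuclideanSpace ℝ (Fin d) :=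
  Matrix.toEuclideanCLM (𝕜 := ℝ) M v

/-- The operator norm of a matrix, acting on Euclidean space. -/
noncomputable def matOpNorm {d : ℕ} (M : Matrix (Fin d) (Fin d) ℝ) : ℝ :=
  ‖Matrix.toEuclideanCLM (𝕜 := ℝ) M‖

/-!
On the ball `‖x‖ ≤ N ^ (1 / (2c))` the derivative bound gives `‖F x‖ ≤ ‖F 0‖ + 2K√N ‖x‖`, so
expanding `‖x + Δt F̃(x)‖²` and using the one-sided Lipschitz condition for the cross term
(`Δt² N = T² / N` for the quadratic one) gives `‖x + Δt F̃(x)‖ ≤ (‖x‖ + λ/N)(1 + λ/N)`.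
Applying `M_k` and iterating is a discrete Grönwall recursion, solved by
`(‖ξ‖ + kλ/N) e^{kλ/N} max_u ∏_{i=u}^{k-1} ‖M_i‖ ≤ D_k`; the hypothesis `D_k ≤ N ^ (1 / (2c))`
keeps every iterate in the ball where the one-step estimate holds.
-/

section TamedDrift

variable {d : ℕ} (F : EuclideanSpace ℝ (Fin d) → EuclideanSpace ℝ (Fin d)) {h : ℝ}
  (x : EuclideanSpace ℝ (Fin d))

lemma tamingFactor_mem_Ioc (hh : 0 ≤ h) : (1 + h * ‖F x‖)⁻¹ ∈ Set.Ioc 0 1 :=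
  ⟨by positivity, inv_le_one_of_one_le₀ (by nlinarith [norm_nonneg (F x)])⟩

lemma norm_tamedDrift_le (hh : 0 ≤ h) : ‖tamedDrift F h x‖ ≤ ‖F x‖ := by
  obtain ⟨hpos, hle⟩ := tamingFactor_mem_Ioc F x hh
  rw [tamedDrift, norm_smul, Real.norm_of_nonneg hpos.le]
  exact mul_le_of_le_one_left (norm_nonneg _) hle

lemma inner_tamedDrift_le {b : ℝ} (hh : 0 ≤ h) (hb : ⟪x, F x⟫ ≤ b) (hb₀ : 0 ≤ b) :
    ⟪x, tamedDrift F h x⟫ ≤ b := by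
  obtain ⟨hpos, hle⟩ := tamingFactor_mem_Ioc F x hh
  rw [tamedDrift, real_inner_smul_right]
  nlinarith [mul_nonneg hpos.le (sub_nonneg.2 hb), mul_nonneg (sub_nonneg.2 hle) hb₀]

end TamedDrift

lemma inner_apply_le_of_oneSidedLipschitz {E : Type*} [NormedAddCommGroup E]
    [InnerProductSpace ℝ E] {F : E → E} {K : ℝ}
    (hos : ∀ x y, ⟪x - y, F x - F y⟫ ≤ K * ‖x - y‖ ^ 2) (x : E) :
    ⟪x, F x⟫ ≤ K * ‖x‖ ^ 2 + ‖F 0‖ * ‖x‖ := by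
  have h := hos x 0
  rw [sub_zero, inner_sub_right] at h
  linarith [real_inner_le_norm x (F 0), mul_comm ‖x‖ ‖F 0‖]

lemma norm_apply_le_of_norm_fderiv_le {E G : Type*} [NormedAddCommGroup E] [NormedSpace ℝ E]
    [NormedAddCommGroup G] [NormedSpace ℝ G] {f : E → G} (hf : Differentiable ℝ f)
    {x : E} {L : ℝ} (hL : ∀ y, ‖y‖ ≤ ‖x‖ → ‖fderiv ℝ f y‖ ≤ L) :
    ‖f x‖ ≤ ‖f 0‖ + L * ‖x‖ := by
  have h := (convex_closedBall (0 : E) ‖x‖).norm_image_sub_le_of_norm_fderiv_le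
    (fun y _ => hf y) (fun y hy => hL y (by simpa using hy))
    (Metric.mem_closedBall_self (norm_nonneg x)) (y := x) (by simp)
  rw [sub_zero] at h
  linarith [norm_sub_norm_le (f x) (f 0)]

lemma rpow_le_sqrt_of_le_rpow {r a c : ℝ} (hr : 0 ≤ r) (ha : 0 ≤ a) (hc : 0 < c)
    (h : r ≤ a ^ (1 / (2 * c))) : r ^ c ≤ √a := by
  calc r ^ c ≤ (a ^ (1 / (2 * c))) ^ c := Real.rpow_le_rpow hr h hc.le
    _ = √a := by
      rw [← Real.rpow_mul ha, Real.sqrt_eq_rpow]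
      congr 1
      field_simp

lemma tamedStep_sq_le (r T K F₀ L p : ℝ) (hr : 0 ≤ r) (hT : 0 ≤ T) (hK : 0 ≤ K)
    (hF₀ : 0 ≤ F₀) (hp : 0 ≤ p) (hL : (1 + 4 * T * K + 2 * T * F₀ + 2 * K) ^ 2 ≤ L) :
    r ^ 2 + 2 * (T * p) * (K * r ^ 2 + F₀ * r) + 2 * (T * p) ^ 2 * F₀ ^ 2
        + 8 * T ^ 2 * K ^ 2 * p * r ^ 2
      ≤ ((r + L * p) * (1 + L * p)) ^ 2 := by
  have hQ : 1 ≤ 1 + 4 * T * K + 2 * T * F₀ + 2 * K := by nlinarith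
  have hL₁ : 1 ≤ L := le_trans (one_le_pow₀ hQ) hL
  have hTK : 0 ≤ T * K := mul_nonneg hT hK
  have hTF : 0 ≤ T * F₀ := mul_nonneg hT hF₀
  have hK' : T * K + 4 * (T * K) ^ 2 ≤ L := by nlinarith
  have hF' : T * F₀ ≤ L := by nlinarith
  have hF'' : 2 * (T * F₀) ^ 2 ≤ L ^ 2 := by nlinarith
  have hLp : 0 ≤ L * p := by positivity
  calc _ ≤ r ^ 2 + 2 * (L * p) * r + (L * p) ^ 2 + 2 * (L * p) * r ^ 2 := by
        nlinarith [mul_le_mul_of_nonneg_right hK' (by positivity : 0 ≤ 2 * p * r ^ 2),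
          mul_le_mul_of_nonneg_right hF' (by positivity : 0 ≤ 2 * p * r),
          mul_le_mul_of_nonneg_right hF'' (by positivity : 0 ≤ p ^ 2)]
    _ ≤ (r + L * p) ^ 2 * (1 + 2 * (L * p)) := by nlinarith [mul_nonneg hr hLp]
    _ ≤ _ := by nlinarith [mul_nonneg (sq_nonneg (r + L * p)) (sq_nonneg (L * p))]

lemma norm_add_smul_tamedDrift_le {d : ℕ}
    {F : EuclideanSpace ℝ (Fin d) → EuclideanSpace ℝ (Fin d)} {K c T lam : ℝ} {N : ℕ} (hK : 0 ≤ K) (hc : 0 < c) (hT : 0 ≤ T) (hN : 1 ≤ N)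
    (hF : Differentiable ℝ F) (hos : ∀ x y, ⟪x - y, F x - F y⟫ ≤ K * ‖x - y‖ ^ 2)
    (hDF : ∀ x, ‖fderiv ℝ F x‖ ≤ K * (1 + ‖x‖ ^ c))
    (hlam : (1 + 4 * T * K + 2 * T * ‖F 0‖ + 2 * K) ^ 2 ≤ lam)
    {x : EuclideanSpace ℝ (Fin d)} (hx : ‖x‖ ≤ (N : ℝ) ^ (1 / (2 * c))) :
    ‖x + (T / N) • tamedDrift F (T / N) x‖ ≤ (‖x‖ + lam / N) * (1 + lam / N) := by
  have hN₀ : (0 : ℝ) < N := by exact_mod_cast hN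
  have hsqrt : 1 ≤ √(N : ℝ) := Real.one_le_sqrt.2 (by exact_mod_cast hN)
  have hΔt : 0 ≤ T / N := by positivity
  set v := tamedDrift F (T / N) x
  have hgrowth : ‖F x‖ ≤ ‖F 0‖ + 2 * K * √(N : ℝ) * ‖x‖ := by
    refine norm_apply_le_of_norm_fderiv_le hF fun y hy => ?_
    have hyc : ‖y‖ ^ c ≤ √(N : ℝ) :=
      rpow_le_sqrt_of_le_rpow (norm_nonneg y) hN₀.le hc (hy.trans hx)
    calc ‖fderiv ℝ F y‖ ≤ K * (1 + ‖y‖ ^ c) := hDF y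
      _ ≤ 2 * K * √(N : ℝ) := by nlinarith
  have hv : ‖v‖ ^ 2 ≤ 2 * ‖F 0‖ ^ 2 + 8 * K ^ 2 * N * ‖x‖ ^ 2 := by
    have h : ‖v‖ ^ 2 ≤ (‖F 0‖ + 2 * K * √(N : ℝ) * ‖x‖) ^ 2 :=
      pow_le_pow_left₀ (norm_nonneg v) ((norm_tamedDrift_le F x hΔt).trans hgrowth) 2
    have hsqrt_sq : √(N : ℝ) ^ 2 = N := Real.sq_sqrt hN₀.le
    nlinarith [sq_nonneg (‖F 0‖ - 2 * K * √(N : ℝ) * ‖x‖)]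
  have hinner : ⟪x, v⟫ ≤ K * ‖x‖ ^ 2 + ‖F 0‖ * ‖x‖ :=
    inner_tamedDrift_le F x hΔt (inner_apply_le_of_oneSidedLipschitz hos x) (by positivity)
  have hexpand :
      ‖x + (T / N) • v‖ ^ 2 = ‖x‖ ^ 2 + 2 * (T / N) * ⟪x, v⟫ + (T / N) ^ 2 * ‖v‖ ^ 2 := by
    rw [norm_add_sq_real, real_inner_smul_right, norm_smul, Real.norm_of_nonneg hΔt]
    ring
  have hsq : ‖x + (T / N) • v‖ ^ 2 ≤ ((‖x‖ + lam / N) * (1 + lam / N)) ^ 2 := by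
    have h := tamedStep_sq_le ‖x‖ T K ‖F 0‖ lam (N : ℝ)⁻¹ (norm_nonneg x) hT hK
      (norm_nonneg _) (by positivity) hlam
    simp only [← div_eq_mul_inv] at h
    have hNN : (T / N) ^ 2 * (8 * K ^ 2 * N * ‖x‖ ^ 2) = 8 * T ^ 2 * K ^ 2 / N * ‖x‖ ^ 2 := by
      field_simp
    rw [hexpand]
    nlinarith [mul_le_mul_of_nonneg_left hinner (by positivity : 0 ≤ 2 * (T / N)),
      mul_le_mul_of_nonneg_left hv (sq_nonneg (T / N))]
  have hlam₀ : 0 ≤ lam := (sq_nonneg _).trans hlam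
  exact (pow_le_pow_iff_left₀ (norm_nonneg _) (by positivity) two_ne_zero).1 hsq

noncomputable def maxTailProd (a : ℕ → ℝ) (n : ℕ) : ℝ :=
  (Finset.range (n + 1)).sup' Finset.nonempty_range_add_one fun u => ∏ k ∈ Finset.Ico u n, a k

lemma one_le_maxTailProd (a : ℕ → ℝ) (n : ℕ) : 1 ≤ maxTailProd a n :=
  le_of_eq_of_le (by simp) (Finset.le_sup' _ (Finset.self_mem_range_succ n))

lemma mul_maxTailProd_le_succ (a : ℕ → ℝ) (n : ℕ) :
    a n * maxTailProd a n ≤ maxTailProd a (n + 1) := by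
  obtain ⟨u, hu, hmax⟩ := Finset.exists_mem_eq_sup' Finset.nonempty_range_add_one
    fun u => ∏ k ∈ Finset.Ico u n, a k
  have hun : u ≤ n := Nat.lt_succ_iff.1 (Finset.mem_range.1 hu)
  calc a n * maxTailProd a n = ∏ k ∈ Finset.Ico u (n + 1), a k := by
        rw [maxTailProd, hmax, Finset.prod_Ico_succ_top hun, mul_comm]
    _ ≤ maxTailProd a (n + 1) := Finset.le_sup' (fun u => ∏ k ∈ Finset.Ico u (n + 1), a k)
        (Finset.mem_range.2 (by omega))

noncomputable def discreteGronwallBound (r₀ ε : ℝ) (a : ℕ → ℝ) (n : ℕ) : ℝ :=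
  (r₀ + n * ε) * Real.exp (n * ε) * maxTailProd a n

section DiscreteGronwall

variable {r₀ ε : ℝ} {a : ℕ → ℝ}

lemma discreteGronwallBound_succ (hr₀ : 0 ≤ r₀) (hε : 0 ≤ ε) {n : ℕ} (ha : 0 ≤ a n) :
    a n * ((discreteGronwallBound r₀ ε a n + ε) * (1 + ε))
      ≤ discreteGronwallBound r₀ ε a (n + 1) := by
  have hE : 1 ≤ Real.exp (n * ε) := Real.one_le_exp (by positivity)
  have hP := one_le_maxTailProd a n
  have hshift : discreteGronwallBound r₀ ε a n + ε
      ≤ (r₀ + (n + 1) * ε) * Real.exp (n * ε) * maxTailProd a n := by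
    have : ε ≤ ε * (Real.exp (n * ε) * maxTailProd a n) :=
      le_mul_of_one_le_right hε (one_le_mul_of_one_le_of_one_le hE (by linarith))
    rw [discreteGronwallBound]
    nlinarith
  calc a n * ((discreteGronwallBound r₀ ε a n + ε) * (1 + ε))
      ≤ a n * ((r₀ + (n + 1) * ε) * Real.exp (n * ε) * maxTailProd a n * Real.exp ε) := by
        gcongr
        linarith [Real.add_one_le_exp ε]
    _ = (r₀ + (n + 1) * ε) * Real.exp ((n + 1) * ε) * (a n * maxTailProd a n) := by
        rw [add_mul (n : ℝ), one_mul, Real.exp_add]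
        ring
    _ ≤ discreteGronwallBound r₀ ε a (n + 1) := by
        rw [discreteGronwallBound]
        push_cast
        gcongr
        exact mul_maxTailProd_le_succ a n

lemma le_discreteGronwallBound (hr₀ : 0 ≤ r₀) (hε : 0 ≤ ε) {y : ℕ → ℝ} {R : ℝ} {n : ℕ}
    (ha : ∀ j < n, 0 ≤ a j) (hy₀ : y 0 ≤ r₀)
    (hbound : ∀ j < n, discreteGronwallBound r₀ ε a j ≤ R)
    (hstep : ∀ j < n, y j ≤ R → y (j + 1) ≤ a j * ((y j + ε) * (1 + ε))) :
    y n ≤ discreteGronwallBound r₀ ε a n := by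
  induction n with
  | zero => simpa [discreteGronwallBound, maxTailProd] using hy₀
  | succ n ih =>
    have hyn : y n ≤ discreteGronwallBound r₀ ε a n :=
      ih (fun j hj => ha j (by omega)) (fun j hj => hbound j (by omega))
        (fun j hj => hstep j (by omega))
    calc y (n + 1) ≤ a n * ((y n + ε) * (1 + ε)) :=
          hstep n n.lt_succ_self (hyn.trans (hbound n n.lt_succ_self))
      _ ≤ a n * ((discreteGronwallBound r₀ ε a n + ε) * (1 + ε)) := by
          gcongr
          exact ha n n.lt_succ_self
      _ ≤ discreteGronwallBound r₀ ε a (n + 1) :=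
          discreteGronwallBound_succ hr₀ hε (ha n n.lt_succ_self)

end DiscreteGronwall

lemma norm_matAct_le {d : ℕ} (M : Matrix (Fin d) (Fin d) ℝ) (v : EuclideanSpace ℝ (Fin d)) :
    ‖matAct M v‖ ≤ matOpNorm M * ‖v‖ :=
  (Matrix.toEuclideanCLM (𝕜 := ℝ) M).le_opNorm v

theorem tamed_exponential_scheme_domination_general (d : ℕ) (K c T : ℝ)
    (hK : 1 ≤ K) (hc : 1 ≤ c) (hT : 0 < T)
    (F : EuclideanSpace ℝ (Fin d) → EuclideanSpace ℝ (Fin d)) (hF : ContDiff ℝ 1 F)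
    (hos : ∀ x y, ⟪x - y, F x - F y⟫ ≤ K * ‖x - y‖ ^ 2)
    (hDF : ∀ x, ‖fderiv ℝ F x‖ ≤ K * (1 + ‖x‖ ^ c))
    (C : Matrix (Fin d) (Fin d) ℝ)
    (N : ℕ) (hN : 1 ≤ N) (Δt : ℝ) (hΔt : Δt = T / N)
    (M : ℕ → Matrix (Fin d) (Fin d) ℝ)
    (ξ : EuclideanSpace ℝ (Fin d)) (Y : ℕ → EuclideanSpace ℝ (Fin d)) (hY0 : Y 0 = ξ)
    (hYrec : ∀ k, k < N → Y (k + 1) = matAct (M k) (Y k + Δt • tamedDrift F Δt (Y k)))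
    (lam : ℝ)
    (hlam : lam = Real.exp (1 + T * matOpNorm C) * (1 + 4 * T * K + 2 * T * ‖F 0‖ + 2 * K) ^ 2)
    (D : ℕ → ℝ)
    (hD : ∀ n, D n = (lam + ‖ξ‖) * Real.exp lam *
      (Finset.range (n + 1)).sup' Finset.nonempty_range_add_one
        (fun u => ∏ k ∈ Finset.Ico u n, matOpNorm (M k)))
    (n : ℕ) (hn : n ≤ N)
    (hDdom : ∀ k, k < n → D k ≤ (N : ℝ) ^ (1 / (2 * c))) :
    ‖Y n‖ ≤ D n := by
  have hlam_ge : (1 + 4 * T * K + 2 * T * ‖F 0‖ + 2 * K) ^ 2 ≤ lam := by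
    rw [hlam]
    exact le_mul_of_one_le_left (sq_nonneg _)
      (Real.one_le_exp (add_nonneg zero_le_one (mul_nonneg hT.le (norm_nonneg _))))
  have hlam_nonneg : 0 ≤ lam := (sq_nonneg _).trans hlam_ge
  have hε : 0 ≤ lam / N := div_nonneg hlam_nonneg N.cast_nonneg
  have hboundD : ∀ j ≤ N,
      discreteGronwallBound ‖ξ‖ (lam / N) (fun k => matOpNorm (M k)) j ≤ D j := by
    intro j hj
    have hjε : j * (lam / N) ≤ lam :=
      (mul_le_mul_of_nonneg_right (Nat.cast_le.2 hj) hε).trans_eq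
        (mul_div_cancel₀ _ (by positivity))
    rw [hD j, add_comm lam]
    change _ ≤ _ * maxTailProd (fun k => matOpNorm (M k)) j
    have := one_le_maxTailProd (fun k => matOpNorm (M k)) j
    unfold discreteGronwallBound
    gcongr
  refine (le_discreteGronwallBound (norm_nonneg ξ) hε (y := fun j => ‖Y j‖)
    (fun j _ => norm_nonneg _) (by rw [hY0])
    (fun j hj => (hboundD j (by omega)).trans (hDdom j hj)) fun j hj hYj => ?_).trans
    (hboundD n hn)
  rw [hYrec j (by omega), hΔt]
  exact (norm_matAct_le _ _).trans <| mul_le_mul_of_nonneg_left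
    (norm_add_smul_tamedDrift_le (by linarith) (by linarith) hT.le hN
      (hF.differentiable one_ne_zero) hos hDF hlam_ge hYj) (norm_nonneg _)

/-- pathwise domination of the tamed exponential scheme by the
dominating process `D`. -/
theorem tamed_exponential_scheme_domination (d m : ℕ) (K c T : ℝ)
    (hK : 1 ≤ K) (hc : 1 ≤ c) (hT : 0 < T)
    (F : EuclideanSpace ℝ (Fin d) → EuclideanSpace ℝ (Fin d)) (hF : ContDiff ℝ 1 F)
    (hos : ∀ x y, ⟪x - y, F x - F y⟫ ≤ K * ‖x - y‖ ^ 2)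
    (hDF : ∀ x, ‖fderiv ℝ F x‖ ≤ K * (1 + ‖x‖ ^ c))
    (A : Matrix (Fin d) (Fin d) ℝ) (B : Fin m → Matrix (Fin d) (Fin d) ℝ)
    (C : Matrix (Fin d) (Fin d) ℝ) (hC : C = A - (1 / 2 : ℝ) • ∑ i, B i ^ 2)
    (N : ℕ) (hN : 1 ≤ N) (Δt : ℝ) (hΔt : Δt = T / N)
    (G : ℕ → Matrix (Fin d) (Fin d) ℝ)
    (M : ℕ → Matrix (Fin d) (Fin d) ℝ)
    (hM : ∀ k, M k = NormedSpace.exp (Δt • C + G k))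
    (ξ : EuclideanSpace ℝ (Fin d)) (Y : ℕ → EuclideanSpace ℝ (Fin d)) (hY0 : Y 0 = ξ)
    (hYrec : ∀ k, k < N → Y (k + 1) = matAct (M k) (Y k + Δt • tamedDrift F Δt (Y k)))
    (lam : ℝ)
    (hlam : lam = Real.exp (1 + T * matOpNorm C) * (1 + 4 * T * K + 2 * T * ‖F 0‖ + 2 * K) ^ 2)
    (D : ℕ → ℝ)
    (hD : ∀ n, D n = (lam + ‖ξ‖) * Real.exp lam *
      (Finset.range (n + 1)).sup' Finset.nonempty_range_add_one
        (fun u => ∏ k ∈ Finset.Ico u n, matOpNorm (M k)))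
    (n : ℕ) (hn : n ≤ N)
    (hDdom : ∀ k, k < n → D k ≤ (N : ℝ) ^ (1 / (2 * c)))
    (hGdom : ∀ k, k < n → matOpNorm (G k) ≤ 1) :
    ‖Y n‖ ≤ D n :=
  tamed_exponential_scheme_domination_general d K c T hK hc hT F hF hos hDF C N hN Δt hΔt M ξ Y hY0
    hYrec lam hlam D hD n hn hDdom
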